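/- arXiv:2402.17988 — 4 statements merged into one kernel-verified Lean document; each statement's English description precedes it below -/
import Mathlib

section
/- If L is a context-free language and R is a regular language, then the right quotient L / R = { l | ∃ r ∈ R, l ++ r ∈ L } is context-free. -/
/-!
Let `M` be a DFA accepting `R`. The new grammar keeps a copy of `g` and adds a nonterminal
`cut n q` for every nonterminal `n` of `g` and state `q`; it derives the words `u` such that `n`
derives some `u ++ v` with `M.eval v = q`. A cut through a yield of `n → α` falls either between
two symbols of `α`, giving the rule `cut n q → α₁` when `α = α₁ ++ α₂` and `α₂` derives a word
leading `M` to `q`, or inside the yield of a nonterminal `m` of `α = α₁ ++ m :: α₂`, giving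
`cut n q' → α₁ (cut m q)` when `α₂` derives a word leading `M` from `q` to `q'`. A fresh start
symbol rewrites to `cut S q` for every accepting `q`.

Both inclusions are proved by induction over derivation trees, phrased as: a predicate on symbols
and their terminal yields that holds for terminals and is preserved by every rule holds for every
derivation.
-/

open List

namespace List

variable {α β : Type*} {R : α → β → Prop}

theorem forall₂_singleton_left_iff {a : α} {ys : List β} :
    Forall₂ R [a] ys ↔ ∃ b, R a b ∧ ys = [b] := by
  simp [forall₂_cons_left_iff]

theorem Forall₂.append_left_inv {l₁ l₂ : List α} {ys : List β} (h : Forall₂ R (l₁ ++ l₂) ys) :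
    ∃ ys₁ ys₂, ys = ys₁ ++ ys₂ ∧ Forall₂ R l₁ ys₁ ∧ Forall₂ R l₂ ys₂ :=
  ⟨ys.take l₁.length, ys.drop l₁.length, (take_append_drop _ _).symm,
    by simpa using forall₂_take l₁.length h, by simpa using forall₂_drop l₁.length h⟩

theorem Forall₂.append_right_inv {xs : List α} {ys₁ ys₂ : List β} (h : Forall₂ R xs (ys₁ ++ ys₂)) :
    ∃ xs₁ xs₂, xs = xs₁ ++ xs₂ ∧ Forall₂ R xs₁ ys₁ ∧ Forall₂ R xs₂ ys₂ :=
  ⟨xs.take ys₁.length, xs.drop ys₁.length, (take_append_drop _ _).symm,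
    forall₂_take_append _ _ _ h, forall₂_drop_append _ _ _ h⟩

end List

namespace ContextFreeGrammar

section Derivations

variable {T : Type*} {g : ContextFreeGrammar T}

theorem Derives.append {u u' w w' : List (Symbol T g.NT)} (hu : g.Derives u u')
    (hw : g.Derives w w') : g.Derives (u ++ w) (u' ++ w') :=
  (hu.append_right w).trans (hw.append_left u')

theorem produces_of_mem_rules {r : ContextFreeRule T g.NT} (hr : r ∈ g.rules) :
    g.Produces [.nonterminal r.input] r.output :=
  ⟨r, hr, ContextFreeRule.Rewrites.input_output⟩

theorem derives_flatten {w : List (Symbol T g.NT)} {xs : List (List T)}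
    (h : Forall₂ (fun s x => g.Derives [s] (x.map .terminal)) w xs) :
    g.Derives w (xs.flatten.map .terminal) := by
  induction h with
  | nil => exact Derives.refl _
  | @cons s x w xs hs _ ih =>
    rw [flatten_cons, map_append, ← singleton_append]
    exact hs.append ih

theorem Derives.exists_forall₂_of_closed {P : Symbol T g.NT → List T → Prop}
    (hterminal : ∀ t, P (.terminal t) [t])
    (hrule : ∀ r ∈ g.rules, ∀ xs, Forall₂ P r.output xs → P (.nonterminal r.input) xs.flatten)
    {w : List (Symbol T g.NT)} {x : List T} (h : g.Derives w (x.map .terminal)) :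
    ∃ xs, Forall₂ P w xs ∧ xs.flatten = x := by
  induction h using Relation.ReflTransGen.head_induction_on with
  | refl =>
    refine ⟨x.map ([·]), ?_, by simp [← flatMap_def]⟩
    simpa [forall₂_map_left_iff, forall₂_map_right_iff, forall₂_same] using
      fun t _ => hterminal t
  | head hp _ ih =>
    obtain ⟨xs, hxs, rfl⟩ := ih
    obtain ⟨r, hr, hrw⟩ := hp
    obtain ⟨p, q, rfl, rfl⟩ := hrw.exists_parts
    obtain ⟨xs₁₂, xs₃, rfl, h₁₂, h₃⟩ := hxs.append_left_inv
    obtain ⟨xs₁, xs₂, rfl, h₁, h₂⟩ := h₁₂.append_left_inv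
    exact ⟨xs₁ ++ [xs₂.flatten] ++ xs₃,
      rel_append (rel_append h₁ (.cons (hrule r hr xs₂ h₂) .nil)) h₃, by simp⟩

theorem Derives.of_closed {P : Symbol T g.NT → List T → Prop}
    (hterminal : ∀ t, P (.terminal t) [t])
    (hrule : ∀ r ∈ g.rules, ∀ xs, Forall₂ P r.output xs → P (.nonterminal r.input) xs.flatten)
    {s : Symbol T g.NT} {x : List T} (h : g.Derives [s] (x.map .terminal)) : P s x := by
  obtain ⟨xs, hxs, rfl⟩ := h.exists_forall₂_of_closed hterminal hrule
  obtain ⟨y, hy, rfl⟩ := forall₂_singleton_left_iff.mp hxs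
  simpa using hy

end Derivations

inductive QuotientNT (N σ : Type)
  | start
  | plain (n : N)
  | cut (n : N) (q : σ)

def QuotientNT.lift {T : Type*} {N σ : Type} : Symbol T N → Symbol T (QuotientNT N σ)
  | .terminal t => .terminal t
  | .nonterminal n => .nonterminal (.plain n)

open QuotientNT

section RightQuotient

variable {T : Type*} {σ : Type} (g : ContextFreeGrammar T) (M : DFA T σ)

inductive IsQuotientRule : ContextFreeRule T (QuotientNT g.NT σ) → Prop
  | start {q : σ} (hq : q ∈ M.accept) :
      IsQuotientRule ⟨.start, [.nonterminal (.cut g.initial q)]⟩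
  | plain {r : ContextFreeRule T g.NT} (hr : r ∈ g.rules) :
      IsQuotientRule ⟨.plain r.input, r.output.map lift⟩
  | boundary {r : ContextFreeRule T g.NT} (hr : r ∈ g.rules) {x y : List (Symbol T g.NT)}
      {v : List T} (hxy : r.output = x ++ y) (hy : g.Derives y (v.map .terminal)) :
      IsQuotientRule ⟨.cut r.input (M.eval v), x.map lift⟩
  | inside {r : ContextFreeRule T g.NT} (hr : r ∈ g.rules) {x y : List (Symbol T g.NT)}
      {m : g.NT} {q : σ} {v : List T} (hxy : r.output = x ++ .nonterminal m :: y)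
      (hy : g.Derives y (v.map .terminal)) :
      IsQuotientRule ⟨.cut r.input (M.evalFrom q v), x.map lift ++ [.nonterminal (.cut m q)]⟩

theorem finite_setOf_isQuotientRule [Finite σ] : {r | IsQuotientRule g M r}.Finite := by
  refine Set.Finite.subset (((Set.finite_range fun q : σ =>
      (⟨.start, [.nonterminal (.cut g.initial q)]⟩ : ContextFreeRule T (QuotientNT g.NT σ))).union
    (g.rules.finite_toSet.image fun r => ⟨.plain r.input, r.output.map lift⟩)).union
    ((g.rules.finite_toSet.biUnion fun r _ => Set.finite_range
      fun p : Fin (r.output.length + 1) × σ =>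
        (⟨.cut r.input p.2, (r.output.take p.1).map lift⟩ :
          ContextFreeRule T (QuotientNT g.NT σ))).union
    (g.rules.finite_toSet.biUnion fun r _ => Set.finite_range
      fun p : Fin r.output.length × σ × σ =>
        (⟨.cut r.input p.2.2, (r.output.take p.1).map lift ++
          match r.output[p.1] with
          | .terminal _ => []
          | .nonterminal m => [.nonterminal (.cut m p.2.1)]⟩ :
          ContextFreeRule T (QuotientNT g.NT σ))))) ?_
  rintro _ (@⟨q, hq⟩ | @⟨r, hr⟩ | @⟨r, hr, x, y, v, hxy, -⟩ | @⟨r, hr, x, y, m, q, v, hxy, -⟩)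
  · exact .inl (.inl ⟨q, rfl⟩)
  · exact .inl (.inr ⟨r, hr, rfl⟩)
  · refine .inr (.inl (Set.mem_biUnion hr ⟨(⟨x.length, by simp [hxy]⟩, M.eval v), ?_⟩))
    simp [hxy]
  · refine .inr (.inr (Set.mem_biUnion hr ⟨(⟨x.length, by simp [hxy]⟩, q, M.evalFrom q v), ?_⟩))
    simp [hxy]

noncomputable def rightQuotient [Finite σ] : ContextFreeGrammar T where
  NT := QuotientNT g.NT σ
  initial := .start
  rules := (finite_setOf_isQuotientRule g M).toFinset

def IntendedYield : Symbol T (QuotientNT g.NT σ) → List T → Prop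
  | .terminal t, x => x = [t]
  | .nonterminal .start, x =>
      ∃ v ∈ M.accepts, g.Derives [.nonterminal g.initial] ((x ++ v).map .terminal)
  | .nonterminal (.plain n), x => g.Derives [.nonterminal n] (x.map .terminal)
  | .nonterminal (.cut n q), x =>
      ∃ v, g.Derives [.nonterminal n] ((x ++ v).map .terminal) ∧ M.eval v = q

variable {g M}

theorem IsQuotientRule.produces [Finite σ] {r : ContextFreeRule T (QuotientNT g.NT σ)}
    (hr : IsQuotientRule g M r) : (g.rightQuotient M).Produces [.nonterminal r.input] r.output :=
  produces_of_mem_rules (g := g.rightQuotient M) ((Set.Finite.mem_toFinset _).mpr hr)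

theorem derives_flatten_of_forall₂_intendedYield {w : List (Symbol T g.NT)} {xs : List (List T)}
    (h : Forall₂ (IntendedYield g M) (w.map lift) xs) : g.Derives w (xs.flatten.map .terminal) :=
  derives_flatten <| (forall₂_map_left_iff.mp h).imp fun s x hs => by
    cases s with
    | terminal t => subst hs; exact Derives.refl _
    | nonterminal n => exact hs

theorem IsQuotientRule.intendedYield {r : ContextFreeRule T (QuotientNT g.NT σ)}
    (hr : IsQuotientRule g M r) {xs : List (List T)}
    (h : Forall₂ (IntendedYield g M) r.output xs) :
    IntendedYield g M (.nonterminal r.input) xs.flatten := by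
  cases hr with
  | @start q hq =>
    obtain ⟨x, ⟨v, hv, rfl⟩, rfl⟩ := forall₂_singleton_left_iff.mp h
    exact ⟨v, hq, by simpa using hv⟩
  | @plain r hr =>
    exact (produces_of_mem_rules hr).trans_derives (derives_flatten_of_forall₂_intendedYield h)
  | @boundary r hr x y v hxy hy =>
    refine ⟨v, (produces_of_mem_rules hr).trans_derives ?_, rfl⟩
    rw [hxy, map_append]
    exact (derives_flatten_of_forall₂_intendedYield h).append hy
  | @inside r hr x y m q v hxy hy =>
    obtain ⟨xs, zs, rfl, hx, hzs⟩ := h.append_left_inv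
    obtain ⟨z, ⟨v₁, hm, rfl⟩, rfl⟩ := forall₂_singleton_left_iff.mp hzs
    refine ⟨v₁ ++ v, (produces_of_mem_rules hr).trans_derives ?_,
      by rw [DFA.eval, DFA.evalFrom_of_append]⟩
    rw [hxy, ← singleton_append]
    simpa using ((derives_flatten_of_forall₂_intendedYield hx).append hm).append hy

theorem rightQuotient_derives_cut [Finite σ] {n : g.NT} {u v : List T}
    (h : g.Derives [.nonterminal n] ((u ++ v).map .terminal)) :
    (g.rightQuotient M).Derives [.nonterminal (cut n (M.eval v))] (u.map .terminal) := by
  set G := g.rightQuotient M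
  let P (s : Symbol T g.NT) (x : List T) : Prop :=
    g.Derives [s] (x.map .terminal) ∧ G.Derives [lift s] (x.map .terminal) ∧
      match s with
      | .terminal t => x = [t]
      | .nonterminal n =>
        ∀ u v, x = u ++ v → G.Derives [.nonterminal (cut n (M.eval v))] (u.map .terminal)
  suffices hP : P (.nonterminal n) (u ++ v) from hP.2.2 u v rfl
  refine h.of_closed (P := P) (fun t => ⟨.refl _, .refl _, rfl⟩) fun r hr xs hxs => ?_
  have derives {o ys} (h : Forall₂ P o ys) : g.Derives o (ys.flatten.map .terminal) :=
    derives_flatten (h.imp fun _ _ hs => hs.1)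
  have derivesLift {o ys} (h : Forall₂ P o ys) :
      G.Derives (o.map lift) (ys.flatten.map .terminal) :=
    derives_flatten (forall₂_map_left_iff.mpr (h.imp fun _ _ hs => hs.2.1))
  have boundary {o₁ o₂ ys₁ ys₂} (ho : r.output = o₁ ++ o₂) (h₁ : Forall₂ P o₁ ys₁)
      (h₂ : Forall₂ P o₂ ys₂) :
      G.Derives [.nonterminal (cut r.input (M.eval ys₂.flatten))] (ys₁.flatten.map .terminal) :=
    (IsQuotientRule.boundary hr ho (derives h₂)).produces.trans_derives (derivesLift h₁)
  refine ⟨(produces_of_mem_rules hr).trans_derives (derives hxs),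
    (IsQuotientRule.plain hr).produces.trans_derives (derivesLift hxs), fun u v huv => ?_⟩
  rcases flatten_eq_append_iff.mp huv with
    ⟨as, bs, rfl, rfl, rfl⟩ | ⟨as, bs, c, cs, ds, rfl, rfl, rfl⟩
  · obtain ⟨o₁, o₂, ho, h₁, h₂⟩ := hxs.append_right_inv
    exact boundary ho h₁ h₂
  · obtain ⟨o₁, o₂, ho, h₁, h₂⟩ := hxs.append_right_inv
    obtain ⟨s, o₃, hs, h₃, rfl⟩ := forall₂_cons_right_iff.mp h₂
    cases s with
    | terminal t =>
      obtain ⟨rfl, rfl, rfl⟩ : bs = [] ∧ c = t ∧ cs = [] := by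
        have := hs.2.2
        rcases bs with _ | ⟨_, _ | _⟩ <;> simp_all
      simpa using boundary ho h₁ h₂
    | nonterminal m =>
      rw [DFA.eval, DFA.evalFrom_of_append, map_append]
      exact (IsQuotientRule.inside hr ho (derives h₃)).produces.trans_derives
        ((derivesLift h₁).append (hs.2.2 bs (c :: cs) rfl))

variable (g M) in
theorem language_rightQuotient [Finite σ] :
    (g.rightQuotient M).language = {u | ∃ v ∈ M.accepts, u ++ v ∈ g.language} := by
  ext u
  simp only [mem_language_iff]
  constructor
  · exact fun h => h.of_closed (P := IntendedYield g M) (fun _ => rfl)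
      fun r hr _ => ((Set.Finite.mem_toFinset _).mp hr).intendedYield
  · rintro ⟨v, hv, huv⟩
    exact (IsQuotientRule.start hv).produces.trans_derives (rightQuotient_derives_cut huv)

end RightQuotient

end ContextFreeGrammar

theorem rightQuotient_of_contextFree_regular_isContextFree_general
    {A : Type} (L R : Language A)
    (hL : L.IsContextFree) (hR : R.IsRegular) :
    Language.IsContextFree {l : List A | ∃ r ∈ R, l ++ r ∈ L} := by
  obtain ⟨g, rfl⟩ := hL
  obtain ⟨σ, _, M, rfl⟩ := hR
  exact ⟨g.rightQuotient M, g.language_rightQuotient M⟩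

/-- If `L` is a context-free language and `R` is a regular language over a finite
alphabet `A`, then the right quotient `L / R = { l | ∃ r ∈ R, l ++ r ∈ L }`
is context-free. -/
theorem rightQuotient_of_contextFree_regular_isContextFree
    {A : Type} [Fintype A] (L R : Language A)
    (hL : L.IsContextFree) (hR : R.IsRegular) :
    Language.IsContextFree {l : List A | ∃ r ∈ R, l ++ r ∈ L} :=
  rightQuotient_of_contextFree_regular_isContextFree_general L R hL hR
end

section
/- If chart i of an Earley parse of string α (with respect to CFG G) is empty, then chart j is empty for every j > i, and consequently no extension α ++ γ is accepted by the Earley recognizer. -/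
/-- An Earley item `[E → α • β (i)]`. -/
structure EarleyItem (T N : Type) where
  lhs : N
  before : List (Symbol T N)
  after : List (Symbol T N)
  start : ℕ

/-- `EarleyInChart g w j it`: the Earley algorithm on input `w` puts item `it`
in chart `j` (initialization, predictor, scanner, completer). -/
inductive EarleyInChart {T : Type} (g : ContextFreeGrammar T) (w : List T) :
    ℕ → EarleyItem T g.NT → Prop
  | init (r : ContextFreeRule T g.NT) (hr : r ∈ g.rules) (hinit : r.input = g.initial) :
      EarleyInChart g w 0 ⟨g.initial, [], r.output, 0⟩
  | predict (j s : ℕ) (E A : g.NT) (a b : List (Symbol T g.NT))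
      (h : EarleyInChart g w j ⟨E, a, Symbol.nonterminal A :: b, s⟩)
      (r : ContextFreeRule T g.NT) (hr : r ∈ g.rules) (hA : r.input = A) :
      EarleyInChart g w j ⟨A, [], r.output, j⟩
  | scan (j s : ℕ) (E : g.NT) (t : T) (a b : List (Symbol T g.NT))
      (h : EarleyInChart g w j ⟨E, a, Symbol.terminal t :: b, s⟩)
      (ht : w[j]? = some t) :
      EarleyInChart g w (j + 1) ⟨E, a ++ [Symbol.terminal t], b, s⟩
  | complete (j s k : ℕ) (A E : g.NT) (a ν π : List (Symbol T g.NT))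
      (hc : EarleyInChart g w j ⟨A, a, [], s⟩)
      (hp : EarleyInChart g w s ⟨E, ν, Symbol.nonterminal A :: π, k⟩) :
      EarleyInChart g w j ⟨E, ν ++ [Symbol.nonterminal A], π, k⟩

/-!
Every Earley step derives an item of chart `j` from an item of chart `j` or `j - 1` (plus, for
the completer, one of an earlier chart), so a nonempty chart has a nonempty predecessor and the
nonempty charts form an initial segment. Charts `0, …, |α|` are built reading only the letters
of `α`, so they agree for `α` and `α ++ γ`: chart `i` of `α ++ γ` is empty too, hence so is its
final chart.
-/

namespace EarleyInChart

variable {T : Type} {g : ContextFreeGrammar T} {w : List T}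

theorem start_le {j : ℕ} {it : EarleyItem T g.NT} (h : EarleyInChart g w j it) :
    it.start ≤ j := by
  induction h with
  | init => exact le_rfl
  | predict => exact le_rfl
  | scan _ _ _ _ _ _ _ _ ih => exact ih.trans (Nat.le_succ _)
  | complete _ _ _ _ _ _ _ _ _ _ ihc ihp => exact ihp.trans ihc

theorem exists_of_le {i j : ℕ} {it : EarleyItem T g.NT} (h : EarleyInChart g w j it)
    (hij : i ≤ j) : ∃ it' : EarleyItem T g.NT, EarleyInChart g w i it' := by
  induction h with
  | init r hr hinit =>
    obtain rfl := Nat.le_zero.mp hij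
    exact ⟨_, .init r hr hinit⟩
  | predict _ _ _ _ _ _ _ _ _ _ ih => exact ih hij
  | scan j s E t a b h ht ih =>
    rcases Nat.le_succ_iff.mp hij with hle | rfl
    · exact ih hle
    · exact ⟨_, .scan j s E t a b h ht⟩
  | complete _ _ _ _ _ _ _ _ _ _ ihc _ => exact ihc hij

theorem of_append {γ : List T} {j : ℕ} {it : EarleyItem T g.NT}
    (h : EarleyInChart g (w ++ γ) j it) (hj : j ≤ w.length) : EarleyInChart g w j it := by
  induction h with
  | init r hr hinit => exact .init r hr hinit
  | predict j s E A a b _ r hr hA ih => exact .predict j s E A a b (ih hj) r hr hA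
  | scan j s E t a b _ ht ih =>
    have hjw : j < w.length := hj
    rw [List.getElem?_append_left hjw] at ht
    exact .scan j s E t a b (ih hjw.le) ht
  | complete j s k A E a ν π hc _ ihc ihp =>
    exact .complete j s k A E a ν π (ihc hj) (ihp (hc.start_le.trans hj))

end EarleyInChart

/-- If chart `i` of an Earley parse of string `α` is empty (where `i ≤ |α|`),
then chart `j` is empty for every `j > i`, and consequently no extension
`α ++ γ` is accepted by the Earley recognizer (i.e. no complete item
`[S → out • (0)]` with `S` the start symbol lies in the final chart). -/
theorem earley_empty_chart_propagates {T : Type} (g : ContextFreeGrammar T)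
    (α : List T) (i : ℕ) (hi : i ≤ α.length)
    (hempty : ∀ it : EarleyItem T g.NT, ¬ EarleyInChart g α i it) :
    (∀ j : ℕ, i < j → ∀ it : EarleyItem T g.NT, ¬ EarleyInChart g α j it) ∧
    (∀ γ : List T, ¬ ∃ out : List (Symbol T g.NT),
      EarleyInChart g (α ++ γ) (α ++ γ).length ⟨g.initial, out, [], 0⟩) := by
  refine ⟨fun j hij it h => ?_, fun γ ⟨out, h⟩ => ?_⟩
  · obtain ⟨it', h'⟩ := h.exists_of_le hij.le
    exact hempty it' h'
  · have hi' : i ≤ (α ++ γ).length := hi.trans (List.length_append ▸ Nat.le_add_right _ _)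
    obtain ⟨it', h'⟩ := h.exists_of_le hi'
    exact hempty it' (h'.of_append hi)
end

section
/- Soundness of Earley parsing over an NFA: given CFG G with language 𝒢 and NFA φ with language ℛ, run the generalized Earley algorithm which maintains a chart c_q per NFA state q, scanning an item [E → α • a β (i)] in chart c_j to chart c_k for each k ∈ δ(j, a). If the invariants hold and some final NFA state q has an item [S → α • (s₀)] ∈ c_q where (S, α) is a production of G, then ℛ ∩ 𝒢 is non-empty. -/
/-- An Earley item for the generalized Earley algorithm over an NFA: its span
start is an NFA state (`origin`) rather than an input position. -/
structure EarleyNFAItem (T N σ : Type) where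
  lhs : N
  before : List (Symbol T N)
  after : List (Symbol T N)
  origin : σ

namespace NFA

variable {α σ : Type*} (M : NFA α σ)

theorem evalFrom_mono {S S' : Set σ} (h : S ⊆ S') (x : List α) :
    M.evalFrom S x ⊆ M.evalFrom S' x := by
  rw [← Set.union_eq_self_of_subset_left h, evalFrom_union]
  exact Set.subset_union_left

theorem mem_accepts_of_mem_evalFrom {s₀ q : σ} {x : List α} (hs₀ : s₀ ∈ M.start)
    (hq : q ∈ M.accept) (hx : q ∈ M.evalFrom {s₀} x) : x ∈ M.accepts :=
  M.mem_accepts.2 ⟨q, hq, M.evalFrom_mono (Set.singleton_subset_iff.2 hs₀) x hx⟩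

end NFA

namespace ContextFreeGrammar

variable {T : Type} (g : ContextFreeGrammar T)

theorem derives_output_of_mem_rules {r : ContextFreeRule T g.NT} (hr : r ∈ g.rules) :
    g.Derives [.nonterminal r.input] r.output :=
  Produces.single ⟨r, hr, ContextFreeRule.Rewrites.input_output⟩

theorem mem_language_of_derives_output {r : ContextFreeRule T g.NT} (hr : r ∈ g.rules)
    (hinit : r.input = g.initial) {w : List T} (hw : g.Derives r.output (w.map .terminal)) :
    w ∈ g.language := by
  rw [mem_language_iff, ← hinit]
  exact (g.derives_output_of_mem_rules hr).trans hw

end ContextFreeGrammar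

theorem earley_nfa_soundness_general {T σ : Type} (g : ContextFreeGrammar T) (M : NFA T σ)
    (s₀ : σ) (hs₀ : M.start = {s₀})
    (c : σ → Set (EarleyNFAItem T g.NT σ))
    -- Invariant 1: each item in chart `c j` is witnessed by a string connecting
    -- the item's origin state to `j` that is derivable from the matched part.
    (inv1 : ∀ (j : σ) (it : EarleyNFAItem T g.NT σ), it ∈ c j →
      ∃ γ : List T, j ∈ M.evalFrom {it.origin} γ ∧
        g.Derives it.before (γ.map Symbol.terminal))
    (q : σ) (hq : q ∈ M.accept) (out : List (Symbol T g.NT))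
    (hitem : (⟨g.initial, out, [], s₀⟩ : EarleyNFAItem T g.NT σ) ∈ c q)
    (hrule : ∃ r ∈ g.rules, r.input = g.initial ∧ r.output = out) :
    ∃ w : List T, w ∈ M.accepts ∧ w ∈ g.language := by
  obtain ⟨γ, hγ, hder⟩ := inv1 q _ hitem
  obtain ⟨r, hr, hinit, rfl⟩ := hrule
  exact ⟨γ, M.mem_accepts_of_mem_evalFrom (hs₀ ▸ rfl) hq hγ,
    g.mem_language_of_derives_output hr hinit hder⟩

/-- Soundness of Earley parsing over an NFA: if the two chart invariants hold
and some accepting NFA state `q` has an item `[S → out • (s₀)]` in its chart,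
where `(S, out)` is a production of the grammar, `S` is the start symbol and
`s₀` is the initial NFA state, then `ℛ ∩ 𝒢` is non-empty. -/
theorem earley_nfa_soundness {T σ : Type} (g : ContextFreeGrammar T) (M : NFA T σ)
    (s₀ : σ) (hs₀ : M.start = {s₀})
    (c : σ → Set (EarleyNFAItem T g.NT σ))
    -- Invariant 1: each item in chart `c j` is witnessed by a string connecting
    -- the item's origin state to `j` that is derivable from the matched part.
    (inv1 : ∀ (j : σ) (it : EarleyNFAItem T g.NT σ), it ∈ c j →
      ∃ γ : List T, j ∈ M.evalFrom {it.origin} γ ∧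
        g.Derives it.before (γ.map Symbol.terminal))
    -- Invariant 2: each item's production belongs to the grammar's rules.
    (inv2 : ∀ (j : σ) (it : EarleyNFAItem T g.NT σ), it ∈ c j →
      ∃ r ∈ g.rules, r.input = it.lhs ∧ r.output = it.before ++ it.after)
    (q : σ) (hq : q ∈ M.accept) (out : List (Symbol T g.NT))
    (hitem : (⟨g.initial, out, [], s₀⟩ : EarleyNFAItem T g.NT σ) ∈ c q)
    (hrule : ∃ r ∈ g.rules, r.input = g.initial ∧ r.output = out) :
    ∃ w : List T, w ∈ M.accepts ∧ w ∈ g.language :=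
  earley_nfa_soundness_general g M s₀ hs₀ c inv1 q hq out hitem hrule
end

section
/- For the generalized Earley algorithm over an NFA, the scanner operation preserves the chart-correctness invariant: if [E → α • a β (i)] ∈ c_j satisfies the invariant (∃ γ ∈ ℛ[i, j] derivable from α), then for every k ∈ δ(j, a), the item [E → α a • β (i)] added to c_k also satisfies the invariant. -/
theorem NFA.mem_evalFrom_append_singleton {α σ : Type*} (M : NFA α σ) {S : Set σ}
    {x : List α} {a : α} {s t : σ} (hs : s ∈ M.evalFrom S x) (ht : t ∈ M.step s a) :
    t ∈ M.evalFrom S (x ++ [a]) := by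
  rw [NFA.evalFrom_append, NFA.evalFrom_singleton]
  exact M.mem_stepSet.2 ⟨s, hs, ht⟩

/-- The scanner operation of the generalized Earley algorithm over an NFA
preserves the chart-correctness invariant: if the item `[E → a • t β (i)]` in
chart `c_j` satisfies the invariant (some `γ ∈ ℛ[i, j]` is derivable from `a`),
then for every `k ∈ δ(j, t)` the scanned item `[E → a t • β (i)]` placed in
chart `c_k` also satisfies the invariant. -/
theorem earley_nfa_scanner_preserves_invariant {T σ : Type}
    (g : ContextFreeGrammar T) (M : NFA T σ)
    (i j k : σ) (t : T) (a : List (Symbol T g.NT))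
    (hk : k ∈ M.step j t)
    (h : ∃ γ : List T, j ∈ M.evalFrom {i} γ ∧ g.Derives a (γ.map Symbol.terminal)) :
    ∃ γ' : List T, k ∈ M.evalFrom {i} γ' ∧
      g.Derives (a ++ [Symbol.terminal t]) (γ'.map Symbol.terminal) := by
  obtain ⟨γ, hγ, hd⟩ := h
  refine ⟨γ ++ [t], M.mem_evalFrom_append_singleton hγ hk, ?_⟩
  rw [List.map_append]
  exact hd.append_right _
end
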